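/- Let A be a C*-algebra with a strictly positive element c, and let a = (a_{ij}) be a positive element in the matrix algebra M_n(A). Let d = Σ_{j=1}^n a_{jj} ∈ A be the sum of the diagonal entries of a. Then a ≾ d ⊗ 1_n; moreover, if a belongs to F_{c⊗1_n}(M_n(A)), then d belongs to F_c(A). -/

import Mathlib

/-!
Write `a = s * s` with `s` self-adjoint, using the square root in the C⋆-algebra of matrices
over `A`; then `a = sᴴ * s`, and every entry of `s` satisfies
`s q i * star (s q i) ≤ (s * sᴴ) q q ≤ d`. Put `P_k = F_k(d)` with
`F_k(t) = (k+1)t / ((k+1)t + 1)`. If `v * star v ≤ d`, then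
`‖v - P_k v‖² ≤ ‖(1 - P_k) d (1 - P_k)‖ ≤ sup_{t ≥ 0} t / ((k+1)t + 1)² ≤ 1/(k+1)`,
so `P_k s → s` entrywise. For `H_k = F_k(d) / √d` one has `H_k d H_k = P_k²`, hence
`x_k = diag(H_k) * s` gives `x_kᴴ (d ⊗ 1ₙ) x_k = (P_k s)ᴴ (P_k s) → sᴴ s = a`.
The second claim is read off the diagonal of `(g_ε(c) ⊗ 1ₙ) a = a`.
-/
open Filter Topology Matrix

namespace Stmt13

variable {A : Type*} [NonUnitalCStarAlgebra A] [PartialOrder A] [StarOrderedRing A]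

/-- `d ⊗ 1ₙ`: the block-diagonal matrix `diag (d, …, d)` (`n` copies). -/
def tensorOne {B : Type*} [Zero B] (d : B) (n : ℕ) : Matrix (Fin n) (Fin n) B :=
  Matrix.diagonal fun _ => d

/-- Positivity for a matrix over a C*-algebra: `a` is positive iff `a = bᴴ * b`
for some matrix `b`. -/
def MatPos {n : ℕ} (a : Matrix (Fin n) (Fin n) A) : Prop :=
  ∃ b : Matrix (Fin n) (Fin n) A, a = bᴴ * b

/-- Cuntz subequivalence `a ≾ b` for `a ∈ M_p(A)`, `b ∈ M_q(A)`: there is a sequence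
`(x k)` of `q × p` matrices with `(x k)ᴴ * b * (x k) → a`. -/
def CuntzLeMat {p q : ℕ} (a : Matrix (Fin p) (Fin p) A) (b : Matrix (Fin q) (Fin q) A) :
    Prop :=
  ∃ x : ℕ → Matrix (Fin q) (Fin p) A,
    Tendsto (fun k => (x k)ᴴ * b * (x k)) atTop (nhds a)

/-- `c` is strictly positive in `A`: `c ≥ 0` and `cAc` is dense in `A`. -/
def StrictlyPositive (c : A) : Prop :=
  0 ≤ c ∧ Dense (Set.range fun a : A => c * a * c)

/-- `g_ε : ℝ⁺ → ℝ⁺`, vanishing on `[0, ε]`, equal to `1` on `[2ε, ∞)`, linear on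
`[ε, 2ε]`. -/
noncomputable def gfun (ε : ℝ) : ℝ → ℝ := fun t => min (max ((t - ε) / ε) 0) 1

/-- `F_c(A) = {b ≥ 0 : g_ε(c)·b = b for some ε > 0}`. -/
noncomputable def Fc (c : A) : Set A :=
  {b : A | 0 ≤ b ∧ ∃ ε : ℝ, 0 < ε ∧ cfcₙ (gfun ε) c * b = b}

/-- `F_{c ⊗ 1ₙ}(Mₙ(A)) = {b positive : g_ε(c ⊗ 1ₙ)·b = b for some ε > 0}`, using that
`g_ε(c ⊗ 1ₙ) = g_ε(c) ⊗ 1ₙ`. -/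
noncomputable def FcMat (c : A) (n : ℕ) : Set (Matrix (Fin n) (Fin n) A) :=
  {b | MatPos b ∧ ∃ ε : ℝ, 0 < ε ∧ tensorOne (cfcₙ (gfun ε) c) n * b = b}


section ApproxUnit

/-- The absolute value only makes the function continuous on all of `ℝ`; on the spectrum of a
positive element this is `(k+1)t / ((k+1)t + 1)`. -/
noncomputable def approxUnit (k : ℕ) (t : ℝ) : ℝ := (k + 1) * t / ((k + 1) * |t| + 1)

noncomputable def approxUnitDivSqrt (k : ℕ) (t : ℝ) : ℝ :=
  (k + 1) * √t / ((k + 1) * |t| + 1)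

@[fun_prop]
lemma continuous_approxUnit (k : ℕ) : Continuous (approxUnit k) :=
  Continuous.div (by fun_prop) (by fun_prop) fun _ => by positivity

@[fun_prop]
lemma continuous_approxUnitDivSqrt (k : ℕ) : Continuous (approxUnitDivSqrt k) :=
  Continuous.div (by fun_prop) (by fun_prop) fun _ => by positivity

@[simp]
lemma approxUnit_zero (k : ℕ) : approxUnit k 0 = 0 := by simp [approxUnit]

@[simp]
lemma approxUnitDivSqrt_zero (k : ℕ) : approxUnitDivSqrt k 0 = 0 := by simp [approxUnitDivSqrt]

variable {d : A} (k : ℕ)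

lemma cfcₙ_approxUnitDivSqrt_conj (hd : 0 ≤ d) :
    cfcₙ (approxUnitDivSqrt k) d * d * cfcₙ (approxUnitDivSqrt k) d =
      cfcₙ (approxUnit k) d * cfcₙ (approxUnit k) d := by
  calc _ = cfcₙ (fun t => approxUnitDivSqrt k t * t * approxUnitDivSqrt k t) d := by
        rw [cfcₙ_mul _ (approxUnitDivSqrt k), cfcₙ_mul _ (fun t => t), cfcₙ_id' ℝ d]
    _ = cfcₙ (fun t => approxUnit k t * approxUnit k t) d := by
        refine cfcₙ_congr fun t ht => ?_
        have ht : 0 ≤ t := quasispectrum_nonneg_of_nonneg d hd t ht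
        simp only [approxUnitDivSqrt, approxUnit, abs_of_nonneg ht]
        field_simp
        rw [Real.sq_sqrt ht]
        ring
    _ = _ := cfcₙ_mul _ _ d

lemma norm_conj_one_sub_cfcₙ_approxUnit_le (hd : 0 ≤ d) :
    ‖d - cfcₙ (approxUnit k) d * d - d * cfcₙ (approxUnit k) d +
        cfcₙ (approxUnit k) d * d * cfcₙ (approxUnit k) d‖ ≤ 1 / (k + 1) := by
  have hcfc : d - cfcₙ (approxUnit k) d * d - d * cfcₙ (approxUnit k) d +
        cfcₙ (approxUnit k) d * d * cfcₙ (approxUnit k) d =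
      cfcₙ (fun t => t - approxUnit k t * t - t * approxUnit k t +
        approxUnit k t * t * approxUnit k t) d := by
    rw [cfcₙ_add .., cfcₙ_sub .., cfcₙ_sub ..,
      cfcₙ_mul (fun t => approxUnit k t * t) (approxUnit k), cfcₙ_mul (approxUnit k) (fun t => t),
      cfcₙ_mul (fun t => t) (approxUnit k), cfcₙ_id' ℝ d]
  rw [hcfc]
  refine norm_cfcₙ_le fun t ht => ?_
  have ht : 0 ≤ t := quasispectrum_nonneg_of_nonneg d hd t ht
  have hval : t - approxUnit k t * t - t * approxUnit k t + approxUnit k t * t * approxUnit k t =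
      t / ((k + 1) * t + 1) ^ 2 := by
    simp only [approxUnit, abs_of_nonneg ht]
    field_simp
    ring
  rw [hval, Real.norm_of_nonneg (by positivity), div_le_div_iff₀ (by positivity) (by positivity)]
  nlinarith [sq_nonneg (((k : ℝ) + 1) * t)]

-- `x - p * x - x * p + p * x * p` is `(1 - p) * x * (1 - p)` computed in the unitization.
lemma conj_one_sub_le_conj_one_sub {p x y : A} (hp : IsSelfAdjoint p)
    (hxy : x ≤ y) : x - p * x - x * p + p * x * p ≤ y - p * y - y * p + p * y * p := by
  obtain ⟨w, hw, hww⟩ :=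
    CStarAlgebra.nonneg_iff_exists_isSelfAdjoint_and_eq_mul_self.mp (sub_nonneg.mpr hxy)
  obtain rfl : y = x + w * w := eq_add_of_sub_eq' hww
  rw [← sub_nonneg]
  convert mul_star_self_nonneg (w - p * w) using 1
  rw [star_sub, star_mul, hw.star_eq, hp.star_eq]
  noncomm_ring

lemma norm_sub_cfcₙ_approxUnit_mul_sq_le (hd : 0 ≤ d) {v : A} (hv : v * star v ≤ d) :
    ‖v - cfcₙ (approxUnit k) d * v‖ ^ 2 ≤ 1 / (k + 1) := by
  set P := cfcₙ (approxUnit k) d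
  have hP : IsSelfAdjoint P := cfcₙ_predicate _ _
  calc ‖v - P * v‖ ^ 2 = ‖(v - P * v) * star (v - P * v)‖ := by
        rw [sq, CStarRing.norm_self_mul_star]
    _ ≤ ‖d - P * d - d * P + P * d * P‖ := by
        refine CStarAlgebra.norm_le_norm_of_nonneg_of_le (mul_star_self_nonneg _) ?_
        convert conj_one_sub_le_conj_one_sub hP hv using 1
        rw [star_sub, star_mul, hP.star_eq]
        noncomm_ring
    _ ≤ 1 / (k + 1) := norm_conj_one_sub_cfcₙ_approxUnit_le k hd

lemma tendsto_cfcₙ_approxUnit_mul (hd : 0 ≤ d) {v : A} (hv : v * star v ≤ d) :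
    Tendsto (fun k => cfcₙ (approxUnit k) d * v) atTop (𝓝 v) := by
  have hbound : Tendsto (fun k : ℕ => √(1 / ((k : ℝ) + 1))) atTop (𝓝 0) := by
    simpa using (tendsto_one_div_add_atTop_nhds_zero_nat (𝕜 := ℝ)).sqrt
  rw [tendsto_iff_norm_sub_tendsto_zero]
  refine squeeze_zero (fun _ => norm_nonneg _) (fun k => ?_) hbound
  rw [norm_sub_rev, ← Real.sqrt_sq (norm_nonneg _)]
  exact Real.sqrt_le_sqrt (norm_sub_cfcₙ_approxUnit_mul_sq_le k hd hv)

end ApproxUnit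

section Matrix

variable {m p R : Type*} [Fintype m]

lemma conj_diagonal_eq [NonUnitalSemiring R] [StarRing R] [DecidableEq m] {h e r : R}
    (hh : IsSelfAdjoint h) (hr : IsSelfAdjoint r) (her : h * e * h = r * r) (s : Matrix m p R) :
    (diagonal (fun _ : m => h) * s)ᴴ * diagonal (fun _ : m => e) *
        (diagonal (fun _ : m => h) * s) =
      (diagonal (fun _ : m => r) * s)ᴴ * (diagonal (fun _ : m => r) * s) := by
  simp only [conjTranspose_mul, diagonal_conjTranspose, Pi.star_def, hh.star_eq, hr.star_eq,
    Matrix.mul_assoc]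
  simp only [← Matrix.mul_assoc (diagonal _), diagonal_mul_diagonal, ← _root_.mul_assoc h e h,
    her]

variable [NonUnitalSemiring R] [PartialOrder R] [StarRing R] [StarOrderedRing R] [Fintype p]

lemma trace_conjTranspose_mul_self_nonneg (b : Matrix m p R) : 0 ≤ (bᴴ * b).trace :=
  Finset.sum_nonneg fun _ _ => Finset.sum_nonneg fun _ _ => star_mul_self_nonneg _

lemma mul_star_le_trace_mul_conjTranspose (s : Matrix m p R) (q : m) (i : p) :
    s q i * star (s q i) ≤ (s * sᴴ).trace := by
  have hnonneg : ∀ q i, 0 ≤ s q i * star (s q i) := fun _ _ => mul_star_self_nonneg _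
  calc s q i * star (s q i) ≤ ∑ i', s q i' * star (s q i') :=
        Finset.single_le_sum (fun i' _ => hnonneg q i') (Finset.mem_univ i)
    _ ≤ ∑ q', ∑ i', s q' i' * star (s q' i') :=
        Finset.single_le_sum (f := fun q' => ∑ i', s q' i' * star (s q' i'))
          (fun q' _ => Finset.sum_nonneg fun i' _ => hnonneg q' i') (Finset.mem_univ q)

end Matrix

-- Stated for a general C⋆-algebra because on `CStarMatrix` instance search does not find the
-- `ℝ`-action induced by `ℂ`, so the continuous functional calculus cannot be used there directly.
lemma exists_isSelfAdjoint_mul_self_eq_star_mul_self {B : Type*} [NonUnitalCStarAlgebra B]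
    [PartialOrder B] [StarOrderedRing B] (b : B) :
    ∃ s : B, IsSelfAdjoint s ∧ s * s = star b * b := by
  obtain ⟨s, hs, hss⟩ :=
    CStarAlgebra.nonneg_iff_exists_isSelfAdjoint_and_eq_mul_self.mp (star_mul_self_nonneg b)
  exact ⟨s, hs, hss.symm⟩

lemma exists_isHermitian_mul_self_eq {m : Type*} [Fintype m] (b : Matrix m m A) :
    ∃ s : Matrix m m A, s.IsHermitian ∧ s * s = bᴴ * b :=
  exists_isSelfAdjoint_mul_self_eq_star_mul_self (CStarMatrix.ofMatrix b)

lemma cuntzLeMat_conjTranspose_mul_self {n p : ℕ} {d : A} (hd : 0 ≤ d)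
    (s : Matrix (Fin n) (Fin p) A) (hs : ∀ q i, s q i * star (s q i) ≤ d) :
    CuntzLeMat (sᴴ * s) (tensorOne d n) := by
  refine ⟨fun k => diagonal (fun _ : Fin n => cfcₙ (approxUnitDivSqrt k) d) * s, ?_⟩
  have hconj : ∀ k : ℕ, (diagonal (fun _ : Fin n => cfcₙ (approxUnit k) d) * s)ᴴ *
        (diagonal (fun _ : Fin n => cfcₙ (approxUnit k) d) * s) =
      (diagonal (fun _ : Fin n => cfcₙ (approxUnitDivSqrt k) d) * s)ᴴ * tensorOne d n *
        (diagonal (fun _ : Fin n => cfcₙ (approxUnitDivSqrt k) d) * s) := fun k =>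
    (conj_diagonal_eq (cfcₙ_predicate _ _) (cfcₙ_predicate _ _)
      (cfcₙ_approxUnitDivSqrt_conj k hd) s).symm
  have hPs : Tendsto (fun k => diagonal (fun _ : Fin n => cfcₙ (approxUnit k) d) * s)
      atTop (𝓝 s) := by
    refine tendsto_pi_nhds.mpr fun q => tendsto_pi_nhds.mpr fun i => ?_
    simpa only [diagonal_mul] using tendsto_cfcₙ_approxUnit_mul hd (hs q i)
  exact (((continuous_id.matrix_conjTranspose.matrix_mul continuous_id).tendsto s).comp
    hPs).congr hconj

section MatPos

variable {n : ℕ} {a : Matrix (Fin n) (Fin n) A}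

lemma MatPos.trace_nonneg (ha : MatPos a) : 0 ≤ a.trace := by
  obtain ⟨b, rfl⟩ := ha
  exact trace_conjTranspose_mul_self_nonneg b

lemma MatPos.cuntzLeMat_tensorOne_trace (ha : MatPos a) :
    CuntzLeMat a (tensorOne a.trace n) := by
  obtain ⟨b, rfl⟩ := ha
  obtain ⟨s, hs, hss⟩ := exists_isHermitian_mul_self_eq b
  rw [show bᴴ * b = sᴴ * s by rw [hs.eq, hss]]
  refine cuntzLeMat_conjTranspose_mul_self (trace_conjTranspose_mul_self_nonneg s) s fun q i => ?_
  simpa only [hs.eq] using mul_star_le_trace_mul_conjTranspose s q i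

lemma trace_mem_Fc_of_mem_FcMat {c : A} (ha : a ∈ FcMat c n) : a.trace ∈ Fc c := by
  obtain ⟨hpos, ε, hε, hfix⟩ := ha
  refine ⟨hpos.trace_nonneg, ε, hε, ?_⟩
  rw [trace, Finset.mul_sum]
  refine Finset.sum_congr rfl fun j _ => ?_
  simpa [tensorOne, diagonal_mul] using congrFun (congrFun hfix j) j

end MatPos

theorem diagonal_sum_dominates_general
    (c : A)
    {n : ℕ} (a : Matrix (Fin n) (Fin n) A) (ha : MatPos a) :
    CuntzLeMat a (tensorOne (∑ j, a j j) n) ∧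
      (a ∈ FcMat c n → (∑ j, a j j) ∈ Fc c) :=
  ⟨ha.cuntzLeMat_tensorOne_trace, trace_mem_Fc_of_mem_FcMat⟩

/-- Lemma 5.2: if `c` is strictly positive in `A` and `a = (a_{ij})` is a positive
element of `Mₙ(A)` with diagonal sum `d = Σⱼ a_{jj}`, then `a ≾ d ⊗ 1ₙ`; moreover if
`a ∈ F_{c ⊗ 1ₙ}(Mₙ(A))` then `d ∈ F_c(A)`. -/
theorem diagonal_sum_dominates
    (c : A) (hc : StrictlyPositive c)
    {n : ℕ} (a : Matrix (Fin n) (Fin n) A) (ha : MatPos a) :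
    CuntzLeMat a (tensorOne (∑ j, a j j) n) ∧
      (a ∈ FcMat c n → (∑ j, a j j) ∈ Fc c) :=
  diagonal_sum_dominates_general c a ha

end Stmt13
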